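/- Let G be a finite group such that the prime-order element graph Γ(G) is a cograph. Then every nonidentity element of G has prime power order (G is an EPPO group). -/

import Mathlib

/-- The prime-order element graph of a group: `x ~ y` iff `x ≠ y` and `orderOf (x*y)` is prime. -/
def pog (G : Type*) [Group G] : SimpleGraph G where
  Adj x y := x ≠ y ∧ (orderOf (x * y)).Prime
  symm := by
    constructor
    intro x y ⟨h1, h2⟩
    exact ⟨h1.symm, by
      have : SemiconjBy x (y * x) (x * y) := by simp [SemiconjBy, mul_assoc]
      rwa [this.orderOf_eq]⟩
  loopless := by constructor; intro x ⟨h1, _⟩; exact h1 rfl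

/-- Additive version of the prime-order element graph. -/
def pogAdd (G : Type*) [AddCommGroup G] : SimpleGraph G where
  Adj x y := x ≠ y ∧ (addOrderOf (x + y)).Prime
  symm := by constructor; intro x y ⟨h1, h2⟩; exact ⟨h1.symm, by rwa [add_comm]⟩
  loopless := by constructor; intro x ⟨h1, _⟩; exact h1 rfl

/-- An induced path on four vertices `a ~ b ~ c ~ d`. -/
def IsInducedP4 {V : Type*} (Γ : SimpleGraph V) (a b c d : V) : Prop :=
  a ≠ b ∧ a ≠ c ∧ a ≠ d ∧ b ≠ c ∧ b ≠ d ∧ c ≠ d ∧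
    Γ.Adj a b ∧ Γ.Adj b c ∧ Γ.Adj c d ∧ ¬Γ.Adj a c ∧ ¬Γ.Adj b d ∧ ¬Γ.Adj a d

lemma aux_p4 {G : Type*} [Group G] (x : G) (p q : ℕ) (hp : p.Prime) (hq : q.Prime)
    (hlt : p < q) (hx : orderOf x = p * q) :
    ∃ a b c d : G, IsInducedP4 (pog G) a b c d := by
  have hp0 : p ≠ 0 := hp.pos.ne'
  have hq0 : q ≠ 0 := hq.pos.ne'
  have hne : p ≠ q := hlt.ne
  have cpq : Nat.Coprime p q := (Nat.coprime_primes hp hq).mpr hne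
  have hq2 : q ≠ 2 := by have := hp.two_le; omega
  have hple : p ≤ p * q := Nat.le_mul_of_pos_right p hq.pos
  have hxn : x ^ (p * q) = 1 := by rw [← hx]; exact pow_orderOf_eq_one x
  set a := x ^ p with ha
  set c := x ^ (p * q - p) with hc
  set d := x ^ (p + q) with hd
  -- c is the inverse of a
  have hca : c * a = 1 := by
    rw [hc, ha, ← pow_add]
    have : p * q - p + p = p * q := by omega
    rw [this, hxn]
  have hcinv : c = a⁻¹ := eq_inv_of_mul_eq_one_left hca
  have hoa : orderOf a = q := by
    rw [ha, orderOf_pow_of_dvd hp0 (by rw [hx]; exact Dvd.intro q rfl), hx,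
      Nat.mul_div_cancel_left q hp.pos]
  have hoc : orderOf c = q := by rw [hcinv, orderOf_inv, hoa]
  have hod : orderOf d = p * q := by
    rw [hd, orderOf_pow' (n := p + q) x (Nat.add_pos_left hp.pos q).ne', hx]
    have cop : Nat.Coprime (p * q) (p + q) := by
      apply Nat.Coprime.mul
      · simpa [Nat.coprime_add_self_right] using cpq
      · simpa [Nat.coprime_add_self_left] using cpq.symm
    rw [cop.gcd_eq_one, Nat.div_one]
  have hnotprime_pq : ¬ (p * q).Prime := Nat.not_prime_mul hp.one_lt.ne' hq.one_lt.ne'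
  have hoad : orderOf (a * d) = p * q := by
    rw [ha, hd, ← pow_add, orderOf_pow' (n := p + (p + q)) x (Nat.add_pos_left hp.pos _).ne', hx]
    have cop : Nat.Coprime (p * q) (p + (p + q)) := by
      apply Nat.Coprime.mul
      · have : p + (p + q) = q + 2 * p := by ring
        rw [this]
        simpa [Nat.coprime_add_mul_right_right] using cpq
      · have : p + (p + q) = 2 * p + q := by ring
        rw [this, Nat.coprime_add_self_right]
        exact Nat.Coprime.mul_right ((Nat.coprime_primes hq Nat.prime_two).mpr hq2) cpq.symm
    rw [cop.gcd_eq_one, Nat.div_one]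
  have hocd : orderOf (c * d) = p := by
    have : c * d = x ^ q := by
      rw [hc, hd, ← pow_add]
      have h1 : p * q - p + (p + q) = p * q + q := by omega
      rw [h1, pow_add, hxn, one_mul]
    rw [this, orderOf_pow_of_dvd hq0 (by rw [hx]; exact Dvd.intro_left p rfl), hx,
      mul_comm, Nat.mul_div_cancel_left p hq.pos]
  -- distinctness
  have hane : a ≠ 1 := by
    intro h; rw [h, orderOf_one] at hoa; exact hq.one_lt.ne' hoa.symm
  have hcne : c ≠ 1 := by
    intro h; rw [h, orderOf_one] at hoc; exact hq.one_lt.ne' hoc.symm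
  have hdne : d ≠ 1 := by
    intro h; rw [h, orderOf_one] at hod
    have h2 : 2 * 2 ≤ p * q := Nat.mul_le_mul hp.two_le hq.two_le
    omega
  have hac : a ≠ c := by
    intro h
    rw [← h] at hca
    have h2 : a ^ 2 = 1 := by rw [sq]; exact hca
    have h3 := orderOf_dvd_of_pow_eq_one h2
    rw [hoa] at h3
    have := Nat.le_of_dvd (by norm_num) h3
    omega
  have had : a ≠ d := by
    intro h; rw [h, hod] at hoa
    nlinarith [hp.two_le, hq.pos]
  have hcd : c ≠ d := by
    intro h; rw [h, hod] at hoc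
    nlinarith [hp.two_le, hq.pos]
  refine ⟨a, 1, c, d, hane, hac, had, fun h => hcne h.symm, fun h => hdne h.symm, hcd,
    ⟨hane, by rwa [mul_one, hoa]⟩,
    ⟨fun h => hcne h.symm, by rwa [one_mul, hoc]⟩,
    ⟨hcd, by rwa [hocd]⟩,
    fun h => ?_, fun h => ?_, fun h => ?_⟩
  · obtain ⟨-, h2⟩ := h
    have hac1 : a * c = 1 := by rw [hcinv, mul_inv_cancel]
    rw [hac1, orderOf_one] at h2
    exact h2.one_lt.ne' rfl
  · obtain ⟨-, h2⟩ := h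
    rw [one_mul, hod] at h2
    exact hnotprime_pq h2
  · obtain ⟨-, h2⟩ := h
    rw [hoad] at h2
    exact hnotprime_pq h2

theorem stmt_11 (G : Type*) [Group G] [Fintype G]
    (hcog : ¬∃ a b c d : G, IsInducedP4 (pog G) a b c d) :
    ∀ g : G, g ≠ 1 → IsPrimePow (orderOf g) := by
  intro g hg
  by_contra hnp
  have hn0 : orderOf g ≠ 0 := (orderOf_pos g).ne'
  have hn1 : orderOf g ≠ 1 := fun h => hg (orderOf_eq_one_iff.mp h)
  obtain ⟨p, hp, hpd⟩ := Nat.exists_prime_and_dvd hn1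
  have h2 : ¬ ∀ q : ℕ, q.Prime → q ∣ orderOf g → q = p := by
    intro h
    exact hnp (isPrimePow_iff_unique_prime_dvd.mpr ⟨p, ⟨hp, hpd⟩, fun q ⟨h1, h2⟩ => h q h1 h2⟩)
  push_neg at h2
  obtain ⟨q, hq, hqd, hqp⟩ := h2
  have hdvd : p * q ∣ orderOf g :=
    (Nat.Coprime.mul_dvd_of_dvd_of_dvd ((Nat.coprime_primes hp hq).mpr (Ne.symm hqp)) hpd hqd)
  set x := g ^ (orderOf g / (p * q)) with hxdef
  have hx : orderOf x = p * q := orderOf_pow_orderOf_div hn0 hdvd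
  rcases lt_or_gt_of_ne (Ne.symm hqp) with hlt | hlt
  · exact hcog (aux_p4 x p q hp hq hlt hx)
  · exact hcog (aux_p4 x q p hq hp hlt (by rw [hx, mul_comm]))
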